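/- arXiv:1604.05947 — 3 statements merged into one kernel-verified Lean document; each statement's English description precedes it below -/
import Mathlib

section
/- Let r ≥ 0 and t ≥ 2 be integers and let L_1,…,L_t ∈ ℝ[x,y] be nonzero linear forms that are pairwise non-proportional (they define t distinct lines through the origin). Then the ideal I := ⟨L_1^{r+1},…,L_t^{r+1}⟩ ⊆ ℝ[x,y] contains every monomial x^i y^j with i + j ≥ r + ⌈(r+1)/(t-1)⌉. -/
/-!
A linear functional `φ` vanishing on `I` is described in degree `d = i + j` by the sequence
`c n = φ (x ^ n * y ^ (d - n))`, and `φ` killing `x ^ a * y ^ b * (α x + β y) ^ (r + 1)` says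
that `(α E + β) ^ (r + 1)` kills `c` on `[0, d - r - 1]`, where `E` is the shift. Encoded as
`G = ∑ c n X ^ n / (n! (d - n)!)`, the operator `α E + β` becomes `(α - β X) G' + β d G`, and
this forces `(β X - α) ^ (d - r) ∣ G` (or `deg G ≤ r` when `β = 0`). Distinct lines give
pairwise coprime factors, whose total degree exceeds `d` as soon as
`i + j ≥ r + ⌈(r + 1) / (t - 1)⌉`; so `G = 0`, and `φ` vanishes on every monomial of
degree `d`.
-/

def linearShift {R : Type*} [Semiring R] (α β : R) (c : ℕ → R) (n : ℕ) : R :=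
  α * c (n + 1) + β * c n

theorem linearShift_zero_iterate {R : Type*} [CommSemiring R] (α : R) (c : ℕ → R) (m a : ℕ) :
    (linearShift α 0)^[m] c a = α ^ m * c (a + m) := by
  induction m generalizing a with
  | zero => simp
  | succ m ih =>
    rw [Function.iterate_succ_apply', linearShift, ih, ih]
    ring_nf

section OneVariable

open Polynomial

theorem coeff_X_mul_derivative {R : Type*} [CommSemiring R] (p : R[X]) (n : ℕ) :
    (X * derivative p).coeff n = n * p.coeff n := by
  cases n with
  | zero => simp
  | succ n => rw [coeff_X_mul, coeff_derivative]; push_cast; ring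

variable {K : Type*} [Field K]

/-- The form `∑ c n x^[n] y^[d - n]` in divided powers, dehomogenised at `y = 1`. -/
noncomputable def dividedPowerPoly (d : ℕ) (c : ℕ → K) : K[X] :=
  ∑ n ∈ Finset.range (d + 1), C (c n / (n.factorial * (d - n).factorial)) * X ^ n

theorem coeff_dividedPowerPoly (d : ℕ) (c : ℕ → K) (n : ℕ) :
    (dividedPowerPoly d c).coeff n =
      if n ≤ d then c n / (n.factorial * (d - n).factorial) else 0 := by
  simp [dividedPowerPoly, coeff_C_mul, coeff_X_pow]

theorem natDegree_dividedPowerPoly_le (d : ℕ) (c : ℕ → K) :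
    (dividedPowerPoly d c).natDegree ≤ d :=
  natDegree_le_iff_coeff_eq_zero.mpr fun n hn => by
    rw [coeff_dividedPowerPoly, if_neg (by omega)]

theorem dividedPowerPoly_eq_zero_iff [CharZero K] {d : ℕ} {c : ℕ → K} :
    dividedPowerPoly d c = 0 ↔ ∀ n ≤ d, c n = 0 := by
  refine ⟨fun h n hn => ?_, fun h => Finset.sum_eq_zero fun n hn => ?_⟩
  · have hcoeff := congr_arg (coeff · n) h
    simp only [coeff_dividedPowerPoly, if_pos hn, coeff_zero, div_eq_zero_iff] at hcoeff
    exact hcoeff.resolve_right (by simp [Nat.factorial_ne_zero])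
  · simp [h n (Nat.lt_succ_iff.mp (Finset.mem_range.mp hn))]

theorem natDegree_dividedPowerPoly_le_of_linearShift_zero {α : K} (hα : α ≠ 0) {N r : ℕ}
    {c : ℕ → K} (hc : ∀ a ≤ N, (linearShift α 0)^[r + 1] c a = 0) :
    (dividedPowerPoly (N + (r + 1)) c).natDegree ≤ r := by
  refine natDegree_le_iff_coeff_eq_zero.mpr fun n hn => ?_
  rw [coeff_dividedPowerPoly]
  split_ifs with hnd
  · have h := hc (n - (r + 1)) (by omega)
    rw [linearShift_zero_iterate, Nat.sub_add_cancel (by omega)] at h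
    simp [(mul_eq_zero.mp h).resolve_left (pow_ne_zero _ hα)]
  · rfl

/-- The action of `α ∂ₓ + β ∂_y` on forms of degree `e`, dehomogenised at `y = 1` by Euler's
formula `y ∂_y = e - x ∂ₓ`. -/
noncomputable def apolarOp (α β : K) (e : ℕ) (h : K[X]) : K[X] :=
  (C α - C β * X) * derivative h + C (β * e) * h

theorem natDegree_C_mul_X_sub_C {a b : K} (hb : b ≠ 0) : (C b * X - C a).natDegree = 1 := by
  rw [natDegree_sub_C, natDegree_C_mul_X _ hb]

theorem pow_dvd_of_pow_dvd_apolarOp [CharZero K] {α β : K} (hβ : β ≠ 0) {e q : ℕ}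
    (hq : q ≤ e) {h : K[X]} (hdvd : (C β * X - C α) ^ q ∣ apolarOp α β e h) :
    (C β * X - C α) ^ q ∣ h := by
  induction q generalizing h with
  | zero => exact one_dvd h
  | succ q ih =>
    set v := C β * X - C α
    have hv : v ≠ 0 := ne_zero_of_natDegree_gt (n := 0) (by
      rw [natDegree_C_mul_X_sub_C hβ]; exact one_pos)
    obtain ⟨u, rfl⟩ := ih (by omega) (dvd_trans (pow_dvd_pow v q.le_succ) hdvd)
    have hexpand :
        apolarOp α β e (v ^ q * u) = v ^ q * (C (β * (e - q)) * u - v * derivative u) := by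
      have hder : v * derivative (v ^ q) = C (q : K) * C β * v ^ q := by
        cases q with
        | zero => simp
        | succ q => simp only [v, derivative_pow_succ, derivative_sub, derivative_C_mul_X,
            derivative_C]; push_cast; ring
      simp only [apolarOp, derivative_mul, map_mul, map_sub]
      linear_combination (-u) * hder
    rw [hexpand, pow_succ] at hdvd
    have hcoeff : β * (e - q) ≠ 0 :=
      mul_ne_zero hβ (sub_ne_zero.mpr (by exact_mod_cast (by omega : e ≠ q)))
    have hvu : v ∣ C (β * (e - q)) * u :=
      (dvd_sub_left (dvd_mul_right v _)).mp ((mul_dvd_mul_iff_left (pow_ne_zero q hv)).mp hdvd)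
    obtain ⟨w, rfl⟩ := ((isUnit_C.mpr hcoeff.isUnit).dvd_mul_left).mp hvu
    exact ⟨w, by ring⟩

theorem apolarOp_dividedPowerPoly [CharZero K] (α β : K) (d : ℕ) (c : ℕ → K) :
    apolarOp α β (d + 1) (dividedPowerPoly (d + 1) c) =
      dividedPowerPoly d (linearShift α β c) := by
  ext n
  have hX : ∀ p : K[X], (C α - C β * X) * derivative p =
      C α * derivative p - C β * (X * derivative p) := fun p => by ring
  simp only [apolarOp, hX, coeff_add, coeff_sub, coeff_C_mul, coeff_derivative,
    coeff_X_mul_derivative, coeff_dividedPowerPoly, linearShift]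
  rcases le_or_gt n d with hn | hn
  · obtain ⟨k, rfl⟩ := Nat.exists_eq_add_of_le hn
    simp only [show n + 1 ≤ n + k + 1 by omega, show n ≤ n + k + 1 by omega, hn, if_true,
      show n + k + 1 - (n + 1) = k by omega, show n + k + 1 - n = k + 1 by omega,
      show n + k - n = k by omega, Nat.factorial_succ]
    push_cast
    field_simp
    ring
  · simp only [show ¬ n + 1 ≤ d + 1 by omega, show ¬ n ≤ d by omega, if_false]
    rcases Nat.lt_or_ge (d + 1) n with h | h
    · simp [show ¬ n ≤ d + 1 by omega]
    · obtain rfl : n = d + 1 := by omega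
      push_cast; ring

theorem pow_dvd_dividedPowerPoly [CharZero K] {α β : K} (hβ : β ≠ 0) (N m : ℕ)
    (c : ℕ → K) (hc : ∀ a ≤ N, (linearShift α β)^[m] c a = 0) :
    (C β * X - C α) ^ (N + 1) ∣ dividedPowerPoly (N + m) c := by
  induction m generalizing c with
  | zero =>
    rw [Nat.add_zero, dividedPowerPoly_eq_zero_iff.mpr (by simpa using hc)]
    exact dvd_zero _
  | succ m ih =>
    refine pow_dvd_of_pow_dvd_apolarOp (e := N + m + 1) hβ (by omega) ?_
    rw [← add_assoc, apolarOp_dividedPowerPoly]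
    exact ih _ hc

theorem isCoprime_C_mul_X_sub_C {a b a' b' : K} (h : a * b' - a' * b ≠ 0) :
    IsCoprime (C b * X - C a) (C b' * X - C a') := by
  have hbezout : C (-b') * (C b * X - C a) + C b * (C b' * X - C a') = C (a * b' - a' * b) := by
    simp only [map_neg, map_sub, map_mul]
    ring
  refine ⟨C (a * b' - a' * b)⁻¹ * C (-b'), C (a * b' - a' * b)⁻¹ * C b, ?_⟩
  rw [mul_assoc, mul_assoc, ← mul_add, hbezout, ← C_mul, inv_mul_cancel₀ h, C_1]

theorem card_mul_le_natDegree_of_pow_dvd {ι : Type*} {s : Finset ι} {α β : ι → K}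
    (hΔ : (s : Set ι).Pairwise fun k l => α k * β l - α l * β k ≠ 0)
    (hβ : ∀ k ∈ s, β k ≠ 0) {m : ℕ} {P : K[X]} (hP : P ≠ 0)
    (hdvd : ∀ k ∈ s, (C (β k) * X - C (α k)) ^ m ∣ P) :
    s.card * m ≤ P.natDegree := by
  have hdeg : ∀ k ∈ s, (C (β k) * X - C (α k)).natDegree = 1 := fun k hk =>
    natDegree_C_mul_X_sub_C (hβ k hk)
  have hne : ∀ k ∈ s, (C (β k) * X - C (α k)) ^ m ≠ 0 := fun k hk =>
    pow_ne_zero _ (ne_zero_of_natDegree_gt (n := 0) (by rw [hdeg k hk]; exact one_pos))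
  have hprod : ∏ k ∈ s, (C (β k) * X - C (α k)) ^ m ∣ P :=
    Finset.prod_dvd_of_coprime (hΔ.mono' fun k l h => (isCoprime_C_mul_X_sub_C h).pow) hdvd
  calc s.card * m = ∑ k ∈ s, ((C (β k) * X - C (α k)) ^ m).natDegree := by
        rw [Finset.sum_congr rfl fun k hk => by rw [natDegree_pow, hdeg k hk, mul_one],
          Finset.sum_const, smul_eq_mul]
    _ = (∏ k ∈ s, (C (β k) * X - C (α k)) ^ m).natDegree := (natDegree_prod _ _ hne).symm
    _ ≤ P.natDegree := natDegree_le_of_dvd hprod hP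

theorem eq_zero_of_linearShift_iterate_eq_zero [CharZero K] {ι : Type*} [Fintype ι] {r N : ℕ}
    {α β : ι → K} (hΔ : Pairwise fun k l => α k * β l - α l * β k ≠ 0)
    (hcard : r + 1 ≤ (Fintype.card ι - 1) * (N + 1)) {c : ℕ → K}
    (hc : ∀ k, ∀ a ≤ N, (linearShift (α k) (β k))^[r + 1] c a = 0) :
    ∀ n ≤ N + (r + 1), c n = 0 := by
  classical
  have hι : 1 < Fintype.card ι := by
    by_contra! h
    simp [Nat.sub_eq_zero_of_le h] at hcard
  set P := dividedPowerPoly (N + (r + 1)) c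
  have hdvd : ∀ k, β k ≠ 0 → (C (β k) * X - C (α k)) ^ (N + 1) ∣ P := fun k hk =>
    pow_dvd_dividedPowerPoly hk N (r + 1) c (hc k)
  refine dividedPowerPoly_eq_zero_iff.mp (by_contra fun hP => ?_)
  by_cases hβ : ∃ k₀, β k₀ = 0
  · obtain ⟨k₀, hk₀⟩ := hβ
    have hβ' : ∀ k ∈ Finset.univ.erase k₀, β k ≠ 0 := fun k hk h =>
      hΔ (Finset.ne_of_mem_erase hk) (by rw [h, hk₀]; ring)
    have hα₀ : α k₀ ≠ 0 := fun h => by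
      obtain ⟨k, hk⟩ := Fintype.exists_ne_of_one_lt_card hι k₀
      exact hΔ hk (by rw [h, hk₀]; ring)
    have hdeg := natDegree_dividedPowerPoly_le_of_linearShift_zero hα₀ (hk₀ ▸ hc k₀)
    have hle := card_mul_le_natDegree_of_pow_dvd (hΔ.set_pairwise _) hβ' hP
      fun k hk => hdvd k (hβ' k hk)
    rw [Finset.card_erase_of_mem (Finset.mem_univ _), Finset.card_univ] at hle
    exact absurd (hcard.trans (hle.trans hdeg)) (by omega)
  · push Not at hβ
    have hle := card_mul_le_natDegree_of_pow_dvd (s := Finset.univ) (hΔ.set_pairwise _)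
      (fun k _ => hβ k) hP fun k _ => hdvd k (hβ k)
    rw [Finset.card_univ, ← Nat.sub_add_cancel hι.le, add_one_mul] at hle
    have := natDegree_dividedPowerPoly_le (N + (r + 1)) c
    omega

end OneVariable

open MvPolynomial

section LinearForms
variable {R : Type*} [CommRing R]

theorem exists_eq_smul_X_add_smul_X {L : MvPolynomial (Fin 2) R} (h : L.IsHomogeneous 1) :
    ∃ a b : R, L = a • X 0 + b • X 1 := by
  have hL : L ∈ Submodule.span R (Set.range X) := by
    rw [← homogeneousSubmodule_one_eq_span_X]; exact h
  obtain ⟨c, hc⟩ := (Submodule.mem_span_range_iff_exists_fun R).mp hL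
  exact ⟨c 0, c 1, by rw [← hc, Fin.sum_univ_two]⟩

theorem apply_X_pow_mul_X_pow_mul_pow (φ : Module.Dual R (MvPolynomial (Fin 2) R)) (α β : R)
    {d : ℕ} (m : ℕ) {a b : ℕ} (hd : a + b + m = d) :
    φ (X 0 ^ a * X 1 ^ b * (α • X 0 + β • X 1) ^ m) =
      (linearShift α β)^[m] (fun n => φ (X 0 ^ n * X 1 ^ (d - n))) a := by
  induction m generalizing a b with
  | zero => simp [show b = d - a by omega]
  | succ m ih =>
    have hsplit : X 0 ^ a * X 1 ^ b * (α • X 0 + β • X 1) ^ (m + 1) =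
        α • (X 0 ^ (a + 1) * X 1 ^ b * (α • X 0 + β • X 1) ^ m) +
          β • (X 0 ^ a * X 1 ^ (b + 1) * (α • X 0 + β • X 1) ^ m :
            MvPolynomial (Fin 2) R) := by
      simp only [smul_eq_C_mul]; ring
    rw [hsplit, map_add, map_smul, map_smul, ih (by omega), ih (by omega),
      Function.iterate_succ_apply', linearShift, smul_eq_mul, smul_eq_mul]

end LinearForms

theorem exists_eq_mul_of_mul_sub_mul_eq_zero {K : Type*} [Field K] {a b a' b' : K}
    (h : a * b' - a' * b = 0) :
    ∃ c, (a = c * a' ∧ b = c * b') ∨ (a' = c * a ∧ b' = c * b) := by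
  by_cases hb' : b' = 0
  · by_cases ha' : a' = 0
    · exact ⟨0, Or.inr (by simp [ha', hb'])⟩
    · refine ⟨a / a', Or.inl ⟨by field_simp, ?_⟩⟩
      have hb : a' * b = 0 := by simpa [hb'] using h
      simp [hb', (mul_eq_zero.mp hb).resolve_left ha']
  · exact ⟨b / b', Or.inl ⟨by field_simp; linear_combination h, by field_simp⟩⟩

theorem le_mul_sub_of_add_div_le {r t d : ℕ} (ht : 2 ≤ t)
    (h : r + (r + t - 1) / (t - 1) ≤ d) :
    r + 1 ≤ (t - 1) * (d - r) := by
  have hq := Nat.lt_div_mul_add (a := r + t - 1) (show 0 < t - 1 by omega)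
  calc r + 1 ≤ (r + t - 1) / (t - 1) * (t - 1) := by omega
    _ ≤ (d - r) * (t - 1) := Nat.mul_le_mul_right _ (by omega)
    _ = (t - 1) * (d - r) := mul_comm _ _

theorem powers_of_linear_forms_contain_high_degree_monomials_general
    (r t : ℕ) (ht2 : 2 ≤ t)
    (L : Fin t → MvPolynomial (Fin 2) ℝ)
    (hhom : ∀ i, (L i).IsHomogeneous 1)
    (hprop : ∀ i j, i ≠ j → ∀ c : ℝ, L i ≠ c • L j)
    (I : Ideal (MvPolynomial (Fin 2) ℝ))
    (hI : I = Ideal.span (Set.range fun i => L i ^ (r + 1))) :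
    ∀ i j : ℕ, r + (r + t - 1) / (t - 1) ≤ i + j →
      (X 0 : MvPolynomial (Fin 2) ℝ) ^ i * (X 1) ^ j ∈ I := by
  intro i j hij
  choose α β hL using fun k => exists_eq_smul_X_add_smul_X (hhom k)
  have hΔ : Pairwise fun k l => α k * β l - α l * β k ≠ 0 := by
    intro k l hkl h
    obtain ⟨c, ⟨ha, hb⟩ | ⟨ha, hb⟩⟩ := exists_eq_mul_of_mul_sub_mul_eq_zero h
    · exact hprop k l hkl c (by rw [hL k, hL l, ha, hb, smul_add, smul_smul, smul_smul])
    · exact hprop l k hkl.symm c (by rw [hL k, hL l, ha, hb, smul_add, smul_smul, smul_smul])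
  have hcard := le_mul_sub_of_add_div_le ht2 hij
  obtain ⟨N, hN⟩ : ∃ N, i + j = N + (r + 1) := ⟨i + j - (r + 1), by
    by_contra h
    simp [show i + j - r = 0 by omega] at hcard⟩
  rw [hN, show N + (r + 1) - r = N + 1 by omega, ← Fintype.card_fin t] at hcard
  by_contra hmem
  obtain ⟨φ, hφ, hφI⟩ := Submodule.exists_le_ker_of_notMem (p := I.restrictScalars ℝ) hmem
  have hrec : ∀ k, ∀ a ≤ N, (linearShift (α k) (β k))^[r + 1]
      (fun n => φ (X 0 ^ n * X 1 ^ (N + (r + 1) - n))) a = 0 := fun k a ha => by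
    rw [← apply_X_pow_mul_X_pow_mul_pow φ (α k) (β k) (r + 1) (b := N - a) (by omega),
      ← hL k]
    refine hφI (I.mul_mem_left _ ?_)
    rw [hI]
    exact Ideal.subset_span ⟨k, rfl⟩
  refine hφ ?_
  simpa [show N + (r + 1) - i = j by omega] using
    eq_zero_of_linearShift_iterate_eq_zero hΔ hcard hrec i (by omega)

theorem powers_of_linear_forms_contain_high_degree_monomials
    (r t : ℕ) (ht2 : 2 ≤ t)
    (L : Fin t → MvPolynomial (Fin 2) ℝ)
    (hhom : ∀ i, (L i).IsHomogeneous 1)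
    (hne : ∀ i, L i ≠ 0)
    (hprop : ∀ i j, i ≠ j → ∀ c : ℝ, L i ≠ c • L j)
    (I : Ideal (MvPolynomial (Fin 2) ℝ))
    (hI : I = Ideal.span (Set.range fun i => L i ^ (r + 1))) :
    ∀ i j : ℕ, r + (r + t - 1) / (t - 1) ≤ i + j →
      (X 0 : MvPolynomial (Fin 2) ℝ) ^ i * (X 1) ^ j ∈ I :=
  powers_of_linear_forms_contain_high_degree_monomials_general r t ht2 L hhom hprop I hI
end

section
/- Let r ≥ 0 and let G_1,…,G_N ∈ S = ℝ[x,y,z] be homogeneous forms of common degree n, all lying in the ideal ⟨x,y⟩ (so all vanish at [0:0:1]), such that G_1 and G_2 have no common irreducible factor and every G_i lies in the real linear span of G_1 and G_2. Suppose among G_1,…,G_N there are exactly s ≥ 2 pairwise non-proportional forms, set t := min{s, r+2}, and suppose G_1,…,G_t are pairwise non-proportional. Then the ideal J := ⟨G_1^{r+1},…,G_N^{r+1}⟩ equals ⟨G_1^{r+1},…,G_t^{r+1}⟩, and G_1^{r+1},…,G_t^{r+1} minimally generate J, i.e. dim_ℝ(J/mJ) = t. -/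
/-!
Statement 2: curves in a pencil.  `G 1, …, G N` are forms of degree `n` in
`S = ℝ[x,y,z]`, all vanishing at `[0:0:1]` (i.e. lying in `⟨x,y⟩`), with `G 0`, `G 1`
relatively prime and every `G i` in the real span of `G 0` and `G 1`; there are exactly
`s ≥ 2` pairwise non-proportional forms among them.  With `t = min s (r+2)` and
`G 0, …, G (t-1)` pairwise non-proportional, the ideal `J = ⟨G i ^ (r+1)⟩` equals the
ideal generated by the first `t` powers, and these minimally generate it:
`dim_ℝ (J / mJ) = t`.
-/

open MvPolynomial

noncomputable section

abbrev PS := MvPolynomial (Fin 3) ℝ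

/-- `G` and `H` are proportional (one is a real scalar multiple of the other). -/
def Prp (G H : PS) : Prop := (∃ c : ℝ, G = c • H) ∨ (∃ c : ℝ, H = c • G)

/-- The dimension of `J ⊗ S/m = J/mJ` as a real vector space, realized as the image of
`J` in `S ⧸ mJ`, where `m = ⟨x,y,z⟩`.  This is the minimal number of generators of `J`. -/
def mingens (J : Ideal PS) : ℕ :=
  Module.finrank ℝ ↥(Submodule.map
    (Ideal.Quotient.mkₐ ℝ ((Ideal.span {X 0, X 1, X 2} : Ideal PS) * J)).toLinearMap
    (Submodule.restrictScalars ℝ (J : Submodule PS PS)))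

/-!
Write `G i = a i • G₀ + b i • G₁`; then `G i ^ m` is the image of `ℓᵢ ^ m`, `ℓᵢ = a i x + b i y`,
under the substitution `x ↦ G₀, y ↦ G₁` of binary forms, which is injective in each degree since
`G₀, G₁` are coprime. Powers `ℓᵢ ^ m` of at most `m + 1` pairwise non-proportional linear forms
are linearly independent (apply the derivation killing one of them and induct on `m`), so
`m + 1` of them span all binary forms of degree `m`. Hence the first `t` powers `G i ^ (r + 1)`
are independent, and they span every `G i ^ (r + 1)`: for `t = s` each `G i` is proportional to
one of the first `t`, for `t = r + 2` by the spanning statement. Finally, if `J` is generated by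
linearly independent forms of one degree `D`, then `J = span_ℝ(forms) ⊕ mJ` because `mJ` has no
component in degree `D`, so `dim J/mJ` is the number of forms.
-/

def binaryLinearForm (p : ℝ × ℝ) : MvPolynomial (Fin 2) ℝ := C p.1 * X 0 + C p.2 * X 1

def binaryMonomial (m : ℕ) (k : Fin (m + 1)) : MvPolynomial (Fin 2) ℝ :=
  X 0 ^ (k : ℕ) * X 1 ^ (m - k)

/-- The derivation killing `binaryLinearForm p`. -/
def polarDeriv (p : ℝ × ℝ) :
    Derivation ℝ (MvPolynomial (Fin 2) ℝ) (MvPolynomial (Fin 2) ℝ) :=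
  p.1 • pderiv 1 - p.2 • pderiv 0

lemma binaryLinearForm_ne_zero {p : ℝ × ℝ} (hp : p ≠ 0) : binaryLinearForm p ≠ 0 := by
  intro h
  have h₀ := congrArg (eval ![1, 0]) h
  have h₁ := congrArg (eval ![0, 1]) h
  simp only [binaryLinearForm, map_add, map_mul, eval_C, eval_X, map_zero] at h₀ h₁
  exact hp (Prod.ext (by simpa using h₀) (by simpa using h₁))

lemma binaryLinearForm_pow_mem_span_binaryMonomial (p : ℝ × ℝ) (m : ℕ) :
    binaryLinearForm p ^ m ∈ Submodule.span ℝ (Set.range (binaryMonomial m)) := by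
  rw [binaryLinearForm, add_pow]
  refine Submodule.sum_mem _ fun k hk => ?_
  have hterm : (C p.1 * X 0) ^ k * (C p.2 * X 1) ^ (m - k) * (m.choose k : MvPolynomial (Fin 2) ℝ)
      = (p.1 ^ k * p.2 ^ (m - k) * m.choose k) • binaryMonomial m ⟨k, Finset.mem_range.mp hk⟩ := by
    rw [binaryMonomial, smul_eq_C_mul, ← C_eq_coe_nat]
    simp only [mul_pow, C_mul, C_pow]
    ring
  rw [hterm]
  exact Submodule.smul_mem _ _ (Submodule.subset_span ⟨_, rfl⟩)

lemma polarDeriv_binaryLinearForm_pow (p q : ℝ × ℝ) (m : ℕ) :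
    polarDeriv p (binaryLinearForm q ^ (m + 1))
      = (((m : ℝ) + 1) * (p.1 * q.2 - p.2 * q.1)) • binaryLinearForm q ^ m := by
  rw [Derivation.leibniz_pow]
  simp [polarDeriv, binaryLinearForm, smul_eq_C_mul]
  ring

section BinaryForms

variable {ι : Type*} {p : ι → ℝ × ℝ} (hp : ∀ i, p i ≠ 0)
  (hcross : Pairwise fun i j => (p i).1 * (p j).2 - (p i).2 * (p j).1 ≠ 0)
include hp hcross

lemma eq_zero_of_sum_smul_binaryLinearForm_pow_eq_zero [DecidableEq ι] (m : ℕ) {s : Finset ι}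
    (hs : s.card ≤ m + 1) {d : ι → ℝ}
    (hsum : ∑ i ∈ s, d i • binaryLinearForm (p i) ^ m = 0) : ∀ i ∈ s, d i = 0 := by
  induction m generalizing s d with
  | zero =>
    intro i hi
    obtain rfl : s = {i} :=
      Finset.eq_singleton_iff_unique_mem.mpr ⟨hi, fun j hj => Finset.card_le_one.mp hs j hj i hi⟩
    simpa using hsum
  | succ m ih =>
    intro i hi
    have hD : ∑ j ∈ s.erase i, (d j * (((m : ℝ) + 1) * ((p i).1 * (p j).2 - (p i).2 * (p j).1)))
        • binaryLinearForm (p j) ^ m = 0 := by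
      rw [Finset.sum_erase _ (by simp only [sub_self, mul_comm (p i).1, mul_zero, zero_smul]),
        ← map_zero (polarDeriv (p i)), ← hsum, map_sum]
      refine Finset.sum_congr rfl fun j _ => ?_
      rw [Derivation.map_smul, polarDeriv_binaryLinearForm_pow, smul_smul]
    have hrest : ∀ j ∈ s.erase i, d j = 0 := fun j hj => by
      have := ih (by rw [Finset.card_erase_of_mem hi]; omega) hD j hj
      simpa [hcross (Finset.ne_of_mem_erase hj).symm, Nat.cast_add_one_ne_zero] using this
    have hi' : d i • binaryLinearForm (p i) ^ (m + 1) = 0 := by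
      rwa [← Finset.add_sum_erase s _ hi,
        Finset.sum_eq_zero fun j hj => by rw [hrest j hj, zero_smul], add_zero] at hsum
    exact (smul_eq_zero.mp hi').resolve_right (pow_ne_zero _ (binaryLinearForm_ne_zero (hp i)))

variable [Fintype ι]

lemma linearIndependent_binaryLinearForm_pow {m : ℕ} (hcard : Fintype.card ι ≤ m + 1) :
    LinearIndependent ℝ fun i => binaryLinearForm (p i) ^ m := by
  classical
  exact linearIndependent_iff'.mpr fun s d hsum =>
    eq_zero_of_sum_smul_binaryLinearForm_pow_eq_zero hp hcross m
      ((Finset.card_le_univ s).trans hcard) hsum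

lemma span_binaryLinearForm_pow {m : ℕ} (hcard : Fintype.card ι = m + 1) :
    Submodule.span ℝ (Set.range fun i => binaryLinearForm (p i) ^ m)
      = Submodule.span ℝ (Set.range (binaryMonomial m)) := by
  have := FiniteDimensional.span_of_finite ℝ (Set.finite_range (binaryMonomial m))
  refine Submodule.eq_of_le_of_finrank_le ?_ ?_
  · exact Submodule.span_le.mpr <| Set.range_subset_iff.mpr fun i =>
      binaryLinearForm_pow_mem_span_binaryMonomial (p i) m
  · rw [finrank_span_eq_card (linearIndependent_binaryLinearForm_pow hp hcross hcard.le), hcard]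
    exact (finrank_range_le_card _).trans (by simp)

end BinaryForms

lemma aeval_binaryLinearForm {A : Type*} [CommRing A] [Algebra ℝ A] (G₀ G₁ : A) (p : ℝ × ℝ) :
    aeval ![G₀, G₁] (binaryLinearForm p) = p.1 • G₀ + p.2 • G₁ := by
  simp [binaryLinearForm, Algebra.smul_def]

lemma linearIndependent_pow_mul_pow {K A : Type*} [Field K] [CommRing A] [IsDomain A]
    [DecompositionMonoid A] [Algebra K A] {G₀ G₁ : A} (hrel : IsRelPrime G₀ G₁) (hG₁ : G₁ ≠ 0)
    (hu : ¬IsUnit G₁) (m : ℕ) :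
    LinearIndependent K fun k : Fin (m + 1) => G₀ ^ (k : ℕ) * G₁ ^ (m - k) := by
  induction m with
  | zero => simp
  | succ m ih =>
    have hsnoc : (fun k : Fin (m + 2) => G₀ ^ (k : ℕ) * G₁ ^ (m + 1 - k))
        = Fin.snoc (fun k : Fin (m + 1) => G₀ ^ (k : ℕ) * G₁ ^ (m - k) * G₁) (G₀ ^ (m + 1)) := by
      funext k
      induction k using Fin.lastCases with
      | last => simp
      | cast k => simp [mul_assoc, ← pow_succ, Nat.sub_add_comm (Nat.lt_succ_iff.mp k.2)]
    rw [hsnoc]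
    refine LinearIndependent.finSnoc ?_ fun hmem => hu ?_
    · exact ih.map' (LinearMap.mulRight K G₁) (LinearMap.ker_eq_bot.mpr (mul_left_injective₀ hG₁))
    · have hle : Submodule.span K
          (Set.range fun k : Fin (m + 1) => G₀ ^ (k : ℕ) * G₁ ^ (m - k) * G₁)
            ≤ (Ideal.span {G₁}).restrictScalars K :=
        Submodule.span_le.mpr <| Set.range_subset_iff.mpr fun k =>
          Ideal.mem_span_singleton.mpr (dvd_mul_left _ _)
      exact hrel.pow_left (Ideal.mem_span_singleton.mp (hle hmem)) dvd_rfl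

section Pencil

variable {A : Type*} [CommRing A] [Algebra ℝ A] {G₀ G₁ : A}

lemma disjoint_span_binaryMonomial_ker_aeval [IsDomain A] [DecompositionMonoid A]
    (hrel : IsRelPrime G₀ G₁) (hG₁ : G₁ ≠ 0) (hu : ¬IsUnit G₁) (m : ℕ) :
    Disjoint (Submodule.span ℝ (Set.range (binaryMonomial m)))
      (LinearMap.ker (aeval ![G₀, G₁]).toLinearMap) := by
  have hfam : (aeval ![G₀, G₁]).toLinearMap ∘ binaryMonomial m
      = fun k : Fin (m + 1) => G₀ ^ (k : ℕ) * G₁ ^ (m - k) := by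
    funext k
    simp [binaryMonomial]
  exact Submodule.range_ker_disjoint (hfam ▸ linearIndependent_pow_mul_pow hrel hG₁ hu m)

variable {ι : Type*} [Fintype ι] {p : ι → ℝ × ℝ} (hp : ∀ i, p i ≠ 0)
  (hcross : Pairwise fun i j => (p i).1 * (p j).2 - (p i).2 * (p j).1 ≠ 0)
include hp hcross

lemma linearIndependent_pencil_pow [IsDomain A] [DecompositionMonoid A]
    (hrel : IsRelPrime G₀ G₁) (hG₁ : G₁ ≠ 0) (hu : ¬IsUnit G₁) {m : ℕ}
    (hcard : Fintype.card ι ≤ m + 1) :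
    LinearIndependent ℝ fun i => ((p i).1 • G₀ + (p i).2 • G₁) ^ m := by
  have hdisj := (disjoint_span_binaryMonomial_ker_aeval hrel hG₁ hu m).mono_left <|
    Submodule.span_le.mpr <| Set.range_subset_iff.mpr fun i =>
      binaryLinearForm_pow_mem_span_binaryMonomial (p i) m
  have := (linearIndependent_binaryLinearForm_pow hp hcross hcard).map hdisj
  simpa only [Function.comp_def, AlgHom.toLinearMap_apply, map_pow, aeval_binaryLinearForm]
    using this

lemma pencil_pow_mem_span {m : ℕ} (hcard : Fintype.card ι = m + 1) (q : ℝ × ℝ) :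
    (q.1 • G₀ + q.2 • G₁) ^ m
      ∈ Submodule.span ℝ (Set.range fun i => ((p i).1 • G₀ + (p i).2 • G₁) ^ m) := by
  have hq := span_binaryLinearForm_pow hp hcross hcard ▸
    binaryLinearForm_pow_mem_span_binaryMonomial q m
  have := Submodule.apply_mem_span_image_of_mem_span (aeval ![G₀, G₁]).toLinearMap hq
  simpa only [← Set.range_comp, Function.comp_def, AlgHom.toLinearMap_apply, map_pow,
    aeval_binaryLinearForm] using this

end Pencil

lemma ideal_span_range_eq_of_mem_span {R A ι κ : Type*} [CommSemiring R] [CommSemiring A]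
    [Algebra R A] {f : ι → A} (e : κ → ι) (h : ∀ i, f i ∈ Submodule.span R (Set.range (f ∘ e))) :
    Ideal.span (Set.range f) = Ideal.span (Set.range (f ∘ e)) :=
  le_antisymm
    (Ideal.span_le.mpr <| Set.range_subset_iff.mpr fun i =>
      Submodule.span_le_restrictScalars R A _ (h i))
    (Ideal.span_mono (Set.range_comp_subset_range e f))

lemma homogeneousComponent_mul_eq_zero {σ R : Type*} [CommSemiring R] {x h : MvPolynomial σ R}
    {D : ℕ} (hx : constantCoeff x = 0) (hh : h.IsHomogeneous D) :
    homogeneousComponent D (x * h) = 0 := by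
  conv_lhs => rw [← sum_homogeneousComponent x]
  rw [Finset.sum_mul, map_sum]
  refine Finset.sum_eq_zero fun e _ => ?_
  rcases Nat.eq_zero_or_pos e with rfl | he
  · rw [homogeneousComponent_zero, show coeff 0 x = 0 from hx, map_zero, zero_mul, map_zero]
  · rw [homogeneousComponent_of_mem ((homogeneousComponent_isHomogeneous e x).mul hh),
      if_neg (by omega)]

lemma homogeneousComponent_eq_zero_of_mem_mul_span {σ R ι : Type*} [CommSemiring R] [Fintype ι]
    {M : Ideal (MvPolynomial σ R)} (hM : M ≤ RingHom.ker constantCoeff)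
    {v : ι → MvPolynomial σ R} {D : ℕ} (hv : ∀ i, (v i).IsHomogeneous D) {x : MvPolynomial σ R}
    (hx : x ∈ M * Ideal.span (Set.range v)) : homogeneousComponent D x = 0 := by
  refine Submodule.mul_induction_on hx (fun y hy z hz => ?_) fun _ _ h₁ h₂ => by
    rw [map_add, h₁, h₂, add_zero]
  obtain ⟨c, rfl⟩ := Ideal.mem_span_range_iff_exists_fun.mp hz
  rw [Finset.mul_sum, map_sum]
  refine Finset.sum_eq_zero fun i _ => ?_
  rw [← mul_assoc]
  exact homogeneousComponent_mul_eq_zero (by simp [RingHom.mem_ker.mp (hM hy)]) (hv i)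

lemma span_X_eq_ker_constantCoeff :
    (Ideal.span {X 0, X 1, X 2} : Ideal PS) = RingHom.ker constantCoeff := by
  refine le_antisymm (Ideal.span_le.mpr ?_) fun p hp => ?_
  · rintro _ (rfl | rfl | rfl) <;> simp
  · have hX : ({X 0, X 1, X 2} : Set PS) = X '' Set.univ := by
      ext
      simp [Fin.exists_fin_succ, eq_comm]
    rw [hX, mem_ideal_span_X_image]
    intro d hd
    obtain ⟨i, hi⟩ := Finsupp.ne_iff.mp (show d ≠ 0 by rintro rfl; exact (mem_support_iff.mp hd) hp)
    exact ⟨i, Set.mem_univ i, hi⟩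

lemma mingens_span_eq_card {ι : Type*} [Fintype ι] {v : ι → PS} {D : ℕ}
    (hli : LinearIndependent ℝ v) (hv : ∀ i, (v i).IsHomogeneous D) :
    mingens (Ideal.span (Set.range v)) = Fintype.card ι := by
  set I : Ideal PS := Ideal.span (Set.range v)
  set K : Ideal PS := Ideal.span {X 0, X 1, X 2} * I
  set q := (Ideal.Quotient.mkₐ ℝ K).toLinearMap
  have hq : ∀ x, q x = 0 ↔ x ∈ K := fun x => Ideal.Quotient.eq_zero_iff_mem
  have hdisj : Disjoint (Submodule.span ℝ (Set.range v)) (LinearMap.ker q) := by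
    refine Submodule.disjoint_def.mpr fun x hW hK => ?_
    have hx : x ∈ homogeneousSubmodule (Fin 3) ℝ D :=
      Submodule.span_le.mpr (Set.range_subset_iff.mpr hv) hW
    have hxD : homogeneousComponent D x = x := by rw [homogeneousComponent_of_mem hx, if_pos rfl]
    rw [← hxD]
    exact homogeneousComponent_eq_zero_of_mem_mul_span span_X_eq_ker_constantCoeff.le hv
      ((hq x).mp hK)
  have hsplit : I.restrictScalars ℝ = Submodule.span ℝ (Set.range v) ⊔ K.restrictScalars ℝ := by
    have hvI : Submodule.span ℝ (Set.range v) ≤ I.restrictScalars ℝ :=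
      Submodule.span_le_restrictScalars ℝ PS _
    have hKI : K.restrictScalars ℝ ≤ I.restrictScalars ℝ :=
      Submodule.restrictScalars_mono ℝ Ideal.mul_le_right
    refine le_antisymm (fun x hx => ?_) (sup_le hvI hKI)
    obtain ⟨c, rfl⟩ := Ideal.mem_span_range_iff_exists_fun.mp hx
    refine Submodule.sum_mem _ fun i _ => ?_
    rw [show c i * v i = constantCoeff (c i) • v i + (c i - C (constantCoeff (c i))) * v i by
      rw [smul_eq_C_mul]; ring]
    refine add_mem
      (Submodule.mem_sup_left (Submodule.smul_mem _ _ (Submodule.subset_span ⟨i, rfl⟩)))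
      (Submodule.mem_sup_right (Ideal.mul_mem_mul ?_ (Ideal.subset_span ⟨i, rfl⟩)))
    rw [span_X_eq_ker_constantCoeff, RingHom.mem_ker]
    simp
  have hmap : Submodule.map q (I.restrictScalars ℝ) = Submodule.span ℝ (Set.range (q ∘ v)) := by
    rw [hsplit, Submodule.map_sup, Submodule.map_span, Set.range_comp,
      (LinearMap.le_ker_iff_map.mp fun x hx => (hq x).mpr hx), sup_bot_eq]
  rw [mingens, hmap, finrank_span_eq_card (hli.map hdisj)]

lemma prp_zero_left (H : PS) : Prp 0 H := Or.inl ⟨0, (zero_smul ℝ H).symm⟩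

lemma prp_zero_right (G : PS) : Prp G 0 := Or.inr ⟨0, (zero_smul ℝ G).symm⟩

lemma ne_zero_of_not_prp_left {G H : PS} (h : ¬Prp G H) : G ≠ 0 := by
  rintro rfl
  exact h (prp_zero_left H)

lemma ne_zero_of_not_prp_right {G H : PS} (h : ¬Prp G H) : H ≠ 0 := by
  rintro rfl
  exact h (prp_zero_right G)

lemma Prp.symm {G H : PS} (h : Prp G H) : Prp H G := Or.symm h

lemma Prp.exists_eq_smul {G H : PS} (h : Prp G H) (hH : H ≠ 0) : ∃ c : ℝ, G = c • H := by
  rcases h with h | ⟨c, rfl⟩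
  · exact h
  · have hc : c ≠ 0 := by rintro rfl; simp at hH
    exact ⟨c⁻¹, by rw [smul_smul, inv_mul_cancel₀ hc, one_smul]⟩

lemma Prp.trans {G H K : PS} (h₁ : Prp G H) (h₂ : Prp H K) (hH : H ≠ 0) : Prp G K := by
  by_cases hK : K = 0
  · exact hK ▸ prp_zero_right G
  obtain ⟨c, rfl⟩ := h₁.exists_eq_smul hH
  obtain ⟨d, rfl⟩ := h₂.exists_eq_smul hK
  exact Or.inl ⟨c * d, smul_smul c d K⟩

lemma prp_smul_add_smul_of_det_eq_zero (u v : PS) {p q : ℝ × ℝ} (h : p.1 * q.2 - p.2 * q.1 = 0) :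
    Prp (p.1 • u + p.2 • v) (q.1 • u + q.2 • v) := by
  rcases eq_or_ne q.2 0 with hq₂ | hq₂
  · rcases eq_or_ne q.1 0 with hq₁ | hq₁
    · simpa [hq₁, hq₂] using prp_zero_right _
    · have hp₂ : p.2 = 0 := by simpa [hq₂, hq₁] using h
      refine Or.inl ⟨p.1 / q.1, ?_⟩
      rw [hp₂, hq₂, zero_smul, add_zero, add_zero, smul_smul, div_mul_cancel₀ _ hq₁]
  · refine Or.inl ⟨p.2 / q.2, ?_⟩
    rw [smul_add, smul_smul, smul_smul, div_mul_cancel₀ _ hq₂]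
    congr 2
    field_simp
    linarith

lemma not_isUnit_of_not_prp {G₀ G₁ : PS} {n : ℕ} (h₀ : G₀.IsHomogeneous n)
    (h₁ : G₁.IsHomogeneous n) (h : ¬Prp G₀ G₁) : ¬IsUnit G₁ := by
  intro hu
  set c₀ := coeff 0 G₀
  set c₁ := coeff 0 G₁
  have hc : c₁ ≠ 0 := (hu.map constantCoeff).ne_zero
  obtain rfl : n = 0 := by simpa using (h₁ hc).symm
  have e₀ : G₀ = C c₀ :=
    totalDegree_eq_zero_iff_eq_C.mp ((totalDegree_zero_iff_isHomogeneous _).mpr h₀)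
  have e₁ : G₁ = C c₁ :=
    totalDegree_eq_zero_iff_eq_C.mp ((totalDegree_zero_iff_isHomogeneous _).mpr h₁)
  refine h (Or.inl ⟨c₀ / c₁, ?_⟩)
  rw [e₀, e₁, smul_eq_C_mul, ← C_mul, div_mul_cancel₀ _ hc]

lemma exists_prp_of_card_le {ι κ : Type*} [Fintype κ] {F : ι → PS} {T : Finset ι}
    (hT : ∀ i ∈ T, F i ≠ 0) (hrep : ∀ i, ∃ j ∈ T, Prp (F i) (F j)) {e : κ → ι}
    (he : Pairwise fun k l => ¬Prp (F (e k)) (F (e l))) (hcard : T.card ≤ Fintype.card κ)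
    (i : ι) : ∃ k, Prp (F i) (F (e k)) := by
  choose f hfT hfP using hrep
  have hinj : ∀ k l, f (e k) = f (e l) → k = l := fun k l hkl => by
    by_contra hne
    exact he hne ((hfP (e k)).trans (hkl ▸ (hfP (e l)).symm) (hT _ (hfT _)))
  obtain ⟨k, -, hk⟩ := Finset.surj_on_of_inj_on_of_card_le (s := Finset.univ)
    (fun k _ => f (e k)) (fun k _ => hfT _) (fun k l _ _ => hinj k l) (by simpa using hcard)
    (f i) (hfT i)
  exact ⟨k, (hfP i).trans (hk ▸ (hfP (e k)).symm) (hT _ (hfT i))⟩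

theorem pencil_minimal_generation
    (r N n s : ℕ) (hN : 2 ≤ N) (hs : 2 ≤ s)
    (G : Fin N → PS)
    (hhom : ∀ i, (G i).IsHomogeneous n)
    (hrel : IsRelPrime (G ⟨0, by omega⟩) (G ⟨1, by omega⟩))
    (hspan : ∀ i, G i ∈ Submodule.span ℝ {G ⟨0, by omega⟩, G ⟨1, by omega⟩})
    -- there are exactly `s` pairwise non-proportional forms among the `G i`
    (T : Finset (Fin N)) (hTcard : T.card = s)
    (hTdist : ∀ i ∈ T, ∀ j ∈ T, i ≠ j → ¬ Prp (G i) (G j))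
    (hTrep : ∀ i : Fin N, ∃ j ∈ T, Prp (G i) (G j))
    (t : ℕ) (ht : t = min s (r + 2))
    (hfirst : ∀ i j : Fin N, (i : ℕ) < t → (j : ℕ) < t → i ≠ j → ¬ Prp (G i) (G j))
    (J : Ideal PS) (hJ : J = Ideal.span (Set.range fun i => G i ^ (r + 1))) :
    J = Ideal.span ((fun i => G i ^ (r + 1)) '' {i : Fin N | (i : ℕ) < t}) ∧
      mingens J = t := by
  have htN : t ≤ N := by
    have := T.card_le_univ
    rw [hTcard, Fintype.card_fin] at this
    omega
  set e := Fin.castLE htN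
  have : Nontrivial (Fin t) := Fin.nontrivial_iff_two_le.mpr (by omega)
  have hnp : Pairwise fun k l => ¬Prp (G (e k)) (G (e l)) := fun k l hkl =>
    hfirst _ _ k.2 l.2 ((Fin.castLE_injective htN).ne hkl)
  have hGe : ∀ k, G (e k) ≠ 0 := fun k =>
    ne_zero_of_not_prp_left (hnp (exists_ne k).choose_spec.symm)
  have h01 : ¬Prp (G ⟨0, by omega⟩) (G ⟨1, by omega⟩) :=
    hfirst _ _ (by simp; omega) (by simp; omega) (by simp)
  choose a b hab using fun i => Submodule.mem_span_pair.mp (hspan i)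
  have hcross : Pairwise fun k l =>
      a (e k) * b (e l) - b (e k) * a (e l) ≠ 0 := fun k l hkl h => by
    refine hnp hkl ?_
    rw [← hab (e k), ← hab (e l)]
    exact prp_smul_add_smul_of_det_eq_zero _ _ (p := (a (e k), b (e k))) (q := (a (e l), b (e l))) h
  have hp : ∀ k, (a (e k), b (e k)) ≠ 0 := fun k h => hGe k <| by
    rw [← hab (e k), (Prod.mk_eq_zero.mp h).1, (Prod.mk_eq_zero.mp h).2, zero_smul, zero_smul,
      add_zero]
  have hli : LinearIndependent ℝ fun k => G (e k) ^ (r + 1) := by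
    simpa only [hab] using linearIndependent_pencil_pow hp hcross hrel
      (ne_zero_of_not_prp_right h01) (not_isUnit_of_not_prp (hhom _) (hhom _) h01)
      (m := r + 1) (by simp; omega)
  have hmem : ∀ i, G i ^ (r + 1) ∈ Submodule.span ℝ (Set.range fun k => G (e k) ^ (r + 1)) := by
    intro i
    rcases le_or_gt s (r + 2) with hsr | hsr
    · have hT0 : ∀ j ∈ T, G j ≠ 0 := fun j hj => by
        obtain ⟨l, hl, hlj⟩ := T.exists_mem_ne (by omega) j
        exact ne_zero_of_not_prp_left (hTdist j hj l hl hlj.symm)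
      obtain ⟨k, hk⟩ := exists_prp_of_card_le hT0 hTrep hnp (by simp; omega) i
      obtain ⟨c, hc⟩ := hk.exists_eq_smul (hGe k)
      rw [hc, smul_pow]
      exact Submodule.smul_mem _ _ (Submodule.subset_span ⟨k, rfl⟩)
    · simpa only [hab] using pencil_pow_mem_span hp hcross (G₀ := G ⟨0, by omega⟩)
        (G₁ := G ⟨1, by omega⟩) (m := r + 1) (by simp; omega) (a i, b i)
  have hJt : J = Ideal.span (Set.range fun k => G (e k) ^ (r + 1)) :=
    hJ.trans (ideal_span_range_eq_of_mem_span e hmem)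
  refine ⟨by rw [hJt, ← Fin.range_castLE htN, ← Set.range_comp]; rfl, ?_⟩
  rw [hJt, mingens_span_eq_card hli fun k => (hhom _).pow _, Fintype.card_fin]
end
end

section
/- Let I ⊆ S = ℝ[x,y,z] be an ideal generated by polynomials lying in the subring ℝ[x,y] (involving only x and y), and suppose ⟨x,y⟩^k ⊆ I for some k ≥ 0. Then I is saturated with respect to m: (I : m^∞) = I. -/
/-!
Dividing by `X i ^ k` while discarding the monomials it does not divide (`AddMonoidAlgebra.divOf`)
commutes with multiplication by polynomials in which `X i` does not occur. Hence it maps an ideal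
generated by such polynomials into itself, and it sends `X i ^ k * f` back to `f`. So `X i` is a
nonzerodivisor modulo such an ideal, and `m^k f ⊆ I` forces `f ∈ I`
already through `z^k ∈ m^k`.
-/

open MvPolynomial

namespace MvPolynomial

variable {R σ : Type*} [CommSemiring R] {i : σ}

theorem monomial_mul_divOf_single {a : σ →₀ ℕ} (ha : a i = 0) (r : R) (p : MvPolynomial σ R)
    (k : ℕ) :
    (monomial a r * p).divOf (Finsupp.single i k) =
      monomial a r * p.divOf (Finsupp.single i k) := by
  ext m
  have hle : a ≤ Finsupp.single i k + m ↔ a ≤ m := by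
    refine ⟨fun h j => ?_, fun h => h.trans le_add_self⟩
    by_cases hj : j = i
    · simp [hj, ha]
    · simpa [Finsupp.single_apply, Ne.symm hj] using h j
  change coeff (Finsupp.single i k + m) _ = _
  rw [coeff_monomial_mul', coeff_monomial_mul']
  by_cases h : a ≤ m
  · rw [if_pos (hle.mpr h), if_pos h, add_tsub_assoc_of_le h]; rfl
  · rw [if_neg (mt hle.mp h), if_neg h]

theorem mul_divOf_single {t : MvPolynomial σ R} (ht : ∀ a ∈ t.support, a i = 0)
    (p : MvPolynomial σ R) (k : ℕ) :
    (t * p).divOf (Finsupp.single i k) = t * p.divOf (Finsupp.single i k) := by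
  rw [t.as_sum, Finset.sum_mul, Finset.sum_mul]
  exact (map_sum (AddMonoidAlgebra.divOfHom (Multiplicative.ofAdd (Finsupp.single i k))) _ _).trans
    (Finset.sum_congr rfl fun a ha => monomial_mul_divOf_single (ht a ha) _ p k)

theorem divOf_single_mem_span {T : Set (MvPolynomial σ R)}
    (hT : ∀ t ∈ T, ∀ a ∈ t.support, a i = 0)
    {p : MvPolynomial σ R} (hp : p ∈ Ideal.span T) (k : ℕ) :
    p.divOf (Finsupp.single i k) ∈ Ideal.span T := by
  suffices ∀ q, (q * p).divOf (Finsupp.single i k) ∈ Ideal.span T by simpa using this 1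
  induction hp using Submodule.span_induction with
  | mem t ht =>
    intro q
    rw [mul_comm, mul_divOf_single (hT t ht)]
    exact Ideal.mul_mem_right _ _ (Ideal.subset_span ht)
  | zero => simp [AddMonoidAlgebra.zero_divOf]
  | add x y _ _ hx hy =>
    intro q
    rw [mul_add, AddMonoidAlgebra.add_divOf]
    exact add_mem (hx q) (hy q)
  | smul r x _ hx =>
    intro q
    rw [smul_eq_mul, ← mul_assoc]
    exact hx (q * r)

theorem mem_span_of_X_pow_mul_mem {T : Set (MvPolynomial σ R)}
    (hT : ∀ t ∈ T, ∀ a ∈ t.support, a i = 0) {p : MvPolynomial σ R} {k : ℕ}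
    (hp : X i ^ k * p ∈ Ideal.span T) : p ∈ Ideal.span T := by
  have h := divOf_single_mem_span hT hp k
  rwa [X_pow_eq_monomial, show (monomial (Finsupp.single i k) (1 : R) * p).divOf
    (Finsupp.single i k) = p from AddMonoidAlgebra.of'_mul_divOf _ p] at h

end MvPolynomial

theorem ideal_in_xy_is_saturated_general
    (T : Set (MvPolynomial (Fin 3) ℝ))
    (hT : ∀ f ∈ T, ∀ m ∈ f.support, m 2 = 0)
    (I : Ideal (MvPolynomial (Fin 3) ℝ)) (hI : I = Ideal.span T) :
    ∀ f : MvPolynomial (Fin 3) ℝ,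
      (∃ k : ℕ, ∀ g ∈ (Ideal.span {X 0, X 1, X 2} : Ideal (MvPolynomial (Fin 3) ℝ)) ^ k,
          g * f ∈ I) ↔ f ∈ I := by
  subst hI
  intro f
  constructor
  · rintro ⟨k, hk⟩
    have hz : (X 2 : MvPolynomial (Fin 3) ℝ) ∈ Ideal.span {X 0, X 1, X 2} :=
      Ideal.subset_span (by simp)
    exact mem_span_of_X_pow_mul_mem hT (hk _ (Ideal.pow_mem_pow hz k))
  · exact fun hf => ⟨0, fun g _ => Ideal.mul_mem_left _ g hf⟩

theorem ideal_in_xy_is_saturated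
    (T : Set (MvPolynomial (Fin 3) ℝ))
    (hT : ∀ f ∈ T, ∀ m ∈ f.support, m 2 = 0)
    (I : Ideal (MvPolynomial (Fin 3) ℝ)) (hI : I = Ideal.span T)
    (hsupp : ∃ k : ℕ, (Ideal.span {X 0, X 1} : Ideal (MvPolynomial (Fin 3) ℝ)) ^ k ≤ I) :
    ∀ f : MvPolynomial (Fin 3) ℝ,
      (∃ k : ℕ, ∀ g ∈ (Ideal.span {X 0, X 1, X 2} : Ideal (MvPolynomial (Fin 3) ℝ)) ^ k,
          g * f ∈ I) ↔ f ∈ I :=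
  ideal_in_xy_is_saturated_general T hT I hI
end
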